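/- arXiv:2410.04793 — 3 statements merged into one kernel-verified Lean document; each statement's English description precedes it below -/
import Mathlib

section
/- Every finitely generated submodule of a projective module over a von Neumann regular ring is a direct summand. -/
/-!
Over a von Neumann regular ring, finitely many elements `aᵢ = fᵢ x` (values of linear forms at a
vector) admit a common left unit `φ x`, again the value of a linear form: the right ideal they
generate is generated by an idempotent. Applied to the coordinates of `x` in a projective module
this gives `φ x • x = x`, so `y ↦ φ y • x` projects onto `R ∙ x`. A projection onto a finitely
generated submodule is then built one generator at a time: given a projection `f` onto `N`, add the
projection onto `R ∙ (x - f x)` precomposed with `id - f`, which vanishes on `N`.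
-/

open Module Submodule

section VonNeumannRegular

variable {R : Type*} [Ring R] (hR : ∀ a : R, ∃ x : R, a = a * x * a)
include hR

theorem exists_dual_mul_apply_eq {M ι : Type*} [AddCommGroup M] [Module R M]
    (f : ι → Dual R M) (x : M) (s : Finset ι) :
    ∃ φ : Dual R M, ∀ i ∈ s, φ x * f i x = f i x := by
  classical
  induction s using Finset.induction_on with
  | empty => exact ⟨0, by simp⟩
  | @insert k s _ ih =>
    obtain ⟨φ, hφ⟩ := ih
    set e := φ x
    set a := f k x - e * f k x
    obtain ⟨y, hy⟩ := hR a
    -- `e + a y (1 - e)` still hfix everything `e` hfix, and it hfix `f k x = e f k x + a y a`.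
    refine ⟨φ + (f k - φ.smulRight (f k x)).smulRight (y * (1 - e)), ?_⟩
    have hφ' : (φ + (f k - φ.smulRight (f k x)).smulRight (y * (1 - e))) x
        = e + a * y * (1 - e) := by
      simp [a, e, mul_assoc]
    have hfix : ∀ b, e * b = b → (e + a * y * (1 - e)) * b = b := fun b hb => by
      rw [add_mul, mul_assoc _ (1 - e), sub_mul 1 e, one_mul, hb, sub_self, mul_zero, add_zero]
    intro i hi
    rw [hφ']
    rcases Finset.mem_insert.mp hi with rfl | hi
    · rw [add_mul, mul_assoc _ (1 - e), sub_mul 1 e, one_mul, ← hy]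
      exact add_sub_cancel _ _
    · exact hfix _ (hφ i hi)

theorem exists_dual_smul_self_eq {P : Type*} [AddCommGroup P] [Module R P] [Projective R P]
    (x : P) : ∃ φ : Dual R P, φ x • x = x := by
  obtain ⟨s, hs⟩ := projective_def.mp ‹Projective R P›
  obtain ⟨φ, hφ⟩ :=
    exists_dual_mul_apply_eq hR (fun q => Finsupp.lapply q ∘ₗ s) x (s x).support
  have hφs : φ x • s x = s x := by
    ext q
    by_cases hq : q ∈ (s x).support
    · simpa using hφ q hq
    · simp [Finsupp.notMem_support_iff.mp hq]
  refine ⟨φ, ?_⟩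
  calc φ x • x = Finsupp.linearCombination R id (φ x • s x) := by rw [map_smul, hs x]
    _ = x := by rw [hφs, hs x]

theorem LinearMap.IsProj.exists_isProj_sup_span_singleton {P : Type*} [AddCommGroup P]
    [Module R P] [Projective R P] {N : Submodule R P} {f : P →ₗ[R] P} (hf : IsProj N f)
    (x : P) : ∃ g : P →ₗ[R] P, IsProj (N ⊔ span R {x}) g := by
  set q := LinearMap.id - f
  have hqN : ∀ n ∈ N, q n = 0 := fun n hn => by simp [q, hf.map_id n hn]
  set c := q x
  have hcN : c ∈ N ⊔ span R {x} :=
    sub_mem (mem_sup_right (mem_span_singleton_self x)) (mem_sup_left (hf.map_mem x))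
  obtain ⟨φ, hφ⟩ := exists_dual_smul_self_eq hR c
  set g := f + (φ ∘ₗ q).smulRight c
  refine ⟨g, fun y => add_mem (mem_sup_left (hf.map_mem y)) (smul_mem _ _ hcN), ?_⟩
  suffices N ⊔ span R {x} ≤ LinearMap.eqLocus g LinearMap.id from fun y hy => this hy
  refine sup_le (fun n hn => ?_) ((span_singleton_le_iff_mem _ _).mpr ?_)
  · simp [g, hf.map_id n hn, hqN n hn]
  · calc g x = f x + φ c • c := rfl
      _ = x := by rw [hφ]; exact add_sub_cancel (f x) x

theorem exists_isProj_of_fg {P : Type*} [AddCommGroup P] [Module R P] [Projective R P]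
    {N : Submodule R P} (hN : N.FG) : ∃ f : P →ₗ[R] P, LinearMap.IsProj N f := by
  classical
  obtain ⟨S, rfl⟩ := hN
  induction S using Finset.induction_on with
  | empty => exact ⟨0, by simpa using LinearMap.IsProj.bot _ _⟩
  | @insert x S _ ih =>
    obtain ⟨f, hf⟩ := ih
    rw [Finset.coe_insert, span_insert, sup_comm]
    exact hf.exists_isProj_sup_span_singleton hR x

end VonNeumannRegular

/-- Every finitely generated submodule of a projective module over a von Neumann
regular ring is a direct summand. -/
theorem vonNeumannRegular_fg_submodule_isCompl (R : Type*) [Ring R]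
    (hR : ∀ a : R, ∃ x : R, a = a * x * a)
    (P : Type*) [AddCommGroup P] [Module R P] [Module.Projective R P]
    (N : Submodule R P) (hN : N.FG) :
    ∃ C : Submodule R P, IsCompl N C := by
  obtain ⟨f, hf⟩ := exists_isProj_of_fg hR hN
  exact ⟨_, hf.isCompl⟩
end

section
/- If there is a uniform bound n on the projective dimension of all finitely presented R-modules, then every R-module has flat dimension at most n; in particular R has finite weak global dimension. -/
/-!
Let `F` be the canonical free resolution of `N` and `K` its `n`-th syzygy. For a finitely
presented `C`, a projective (hence flat) resolution of `C` of length `n` shows, by dimension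
shifting along it, that `C ⊗ F` is exact at `F_{n+1}`, i.e. `Tor_{n+1}(C, N) = 0`. For
`C = R ⧸ I` with `I` a finitely generated ideal this is `Tor_1(R ⧸ I, K) = 0`, i.e. injectivity
of `I ⊗ K → R ⊗ K`, so `K` is flat by the ideal criterion, and
`0 → K → F_{n-1} → ⋯ → F_0 → N → 0` is a flat resolution of length `n`.
-/

universe u

open CategoryTheory

/-- `M` has projective dimension at most `n`: there is a projective resolution
`0 → P_n → ⋯ → P_0 → M → 0` of length `n` (encoded as an `ℕ`-indexed resolution
which vanishes in degrees `> n`). -/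
def HasProjDimLE {R : Type u} [Ring R] (M : ModuleCat.{u} R) (n : ℕ) : Prop :=
  ∃ (P : ℕ → ModuleCat.{u} R) (d : ∀ i, P (i + 1) ⟶ P i) (ε : P 0 ⟶ M),
    (∀ i, Module.Projective R (P i)) ∧ Function.Surjective ε ∧
    LinearMap.ker ε.hom = LinearMap.range (d 0).hom ∧
    (∀ i, LinearMap.ker (d i).hom = LinearMap.range (d (i + 1)).hom) ∧
    ∀ i, n < i → Subsingleton (P i)

/-- `M` has flat dimension at most `n`: there is a flat resolution
`0 → F_n → ⋯ → F_0 → M → 0` of length `n`. -/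
def HasFlatDimLE {R : Type u} [CommRing R] (M : ModuleCat.{u} R) (n : ℕ) : Prop :=
  ∃ (F : ℕ → ModuleCat.{u} R) (d : ∀ i, F (i + 1) ⟶ F i) (ε : F 0 ⟶ M),
    (∀ i, Module.Flat R (F i)) ∧ Function.Surjective ε ∧
    LinearMap.ker ε.hom = LinearMap.range (d 0).hom ∧
    (∀ i, LinearMap.ker (d i).hom = LinearMap.range (d (i + 1)).hom) ∧
    ∀ i, n < i → Subsingleton (F i)

open LinearMap TensorProduct Function

section FlatDimension

variable {R : Type u} [CommRing R]

theorem HasProjDimLE.hasFlatDimLE {M : ModuleCat.{u} R} {n : ℕ} (h : HasProjDimLE M n) :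
    HasFlatDimLE M n :=
  let ⟨P, d, ε, hP, hres⟩ := h
  ⟨P, d, ε, fun i => have := hP i; inferInstance, hres⟩

theorem hasFlatDimLE_zero_iff {M : ModuleCat.{u} R} : HasFlatDimLE M 0 ↔ Module.Flat R M := by
  constructor
  · rintro ⟨F, d, ε, hF, hε, hε_ker, -, hF_zero⟩
    have : Subsingleton (F 1) := hF_zero 1 zero_lt_one
    have hε_inj : Injective ε.hom := by
      rw [← ker_eq_bot, hε_ker, range_eq_bot]
      exact Subsingleton.elim _ _
    exact Module.Flat.of_linearEquiv (LinearEquiv.ofBijective ε.hom ⟨hε_inj, hε⟩).symm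
  · intro hM
    have hPUnit : ∀ S T : Submodule R PUnit.{u + 1}, S = T := fun _ _ => Subsingleton.elim _ _
    refine ⟨fun | 0 => M | _ + 1 => ModuleCat.of R PUnit, fun | 0 => 0 | _ + 1 => 0, 𝟙 M,
      fun | 0 => hM | _ + 1 => inferInstance, fun x => ⟨x, rfl⟩, ?_,
      fun | 0 | _ + 1 => hPUnit _ _,
      fun | 0, h => absurd h (lt_irrefl 0) | _ + 1, _ => inferInstance⟩
    simp

theorem hasFlatDimLE_succ_iff {M : ModuleCat.{u} R} {m : ℕ} :
    HasFlatDimLE M (m + 1) ↔ ∃ (F : ModuleCat.{u} R) (ε : F →ₗ[R] M),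
      Module.Flat R F ∧ Surjective ε ∧ HasFlatDimLE (ModuleCat.of R (ker ε)) m := by
  constructor
  · rintro ⟨F, d, ε, hF, hε, hε_ker, hd, hF_zero⟩
    have hd_ker : ∀ x, (d 0).hom x ∈ ker ε.hom := fun x => hε_ker ▸ mem_range_self _ x
    refine ⟨F 0, ε.hom, hF 0, hε, fun i => F (i + 1), fun i => d (i + 1),
      ModuleCat.ofHom ((d 0).hom.codRestrict _ hd_ker), fun i => hF (i + 1), ?_, ?_,
      fun i => hd (i + 1), fun i hi => hF_zero (i + 1) (by omega)⟩
    · change Surjective ((d 0).hom.codRestrict _ hd_ker)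
      rw [← range_eq_top, range_codRestrict, ← hε_ker, Submodule.comap_subtype_self]
    · rw [ModuleCat.hom_ofHom, ker_codRestrict]
      exact hd 0
  · rintro ⟨F₀, ε, hF₀, hε, G, dG, εG, hG, hεG, hεG_ker, hdG, hG_zero⟩
    refine ⟨fun | 0 => F₀ | i + 1 => G i,
      fun | 0 => ModuleCat.ofHom ((ker ε).subtype ∘ₗ εG.hom) | i + 1 => dG i,
      ModuleCat.ofHom ε, fun | 0 => hF₀ | i + 1 => hG i, hε, ?_,
      fun | 0 => ?_ | i + 1 => hdG i, fun | 0, h => by omega | i + 1, h => hG_zero i (by omega)⟩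
    · change ker ε = range ((ker ε).subtype ∘ₗ εG.hom)
      rw [range_comp, range_eq_top.mpr hεG, Submodule.map_top, Submodule.range_subtype]
    · change ker ((ker ε).subtype ∘ₗ εG.hom) = range (dG 0).hom
      rw [ker_comp, Submodule.ker_subtype, Submodule.comap_bot]
      exact hεG_ker

end FlatDimension

section Tor

variable {R : Type u} [CommRing R]

theorem LinearMap.rTensor_lTensor_comm {M N P Q : Type*} [AddCommGroup M] [AddCommGroup N]
    [AddCommGroup P] [AddCommGroup Q] [Module R M] [Module R N] [Module R P] [Module R Q]
    (f : M →ₗ[R] P) (g : N →ₗ[R] Q) (x : M ⊗[R] N) :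
    f.rTensor Q (g.lTensor M x) = g.lTensor P (f.rTensor N x) := by
  rw [← comp_apply, ← comp_apply, rTensor_comp_lTensor, lTensor_comp_rTensor]

variable {F : ℕ → Type*} [∀ i, AddCommGroup (F i)] [∀ i, Module R (F i)]
  {d : ∀ i, F (i + 1) →ₗ[R] F i}

/-- Dimension shifting `Tor_{k+2}(C, -) ≅ Tor_{k+1}(C', -)` along `0 → C' → P → C → 0`. -/
theorem lTensor_exact_succ_of_lTensor_exact [∀ i, Module.Flat R (F i)]
    (hd : ∀ i, Exact (d (i + 1)) (d i)) {C' P C : Type*} [AddCommGroup C'] [Module R C']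
    [AddCommGroup P] [Module R P] [Module.Flat R P] [AddCommGroup C] [Module R C]
    {f : C' →ₗ[R] P} {g : P →ₗ[R] C} (hf : Injective f) (hfg : Exact f g)
    (hg : Surjective g) {k : ℕ} (h : Exact ((d (k + 1)).lTensor C') ((d k).lTensor C')) :
    Exact ((d (k + 2)).lTensor C) ((d (k + 1)).lTensor C) := by
  refine exact_of_comp_eq_zero_of_ker_le_range ?_ fun x hx => ?_
  · rw [← lTensor_comp, (hd (k + 1)).linearMap_comp_eq_zero, lTensor_zero]
  obtain ⟨y, rfl⟩ := g.rTensor_surjective (F (k + 2)) hg x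
  have hgy : g.rTensor _ ((d (k + 1)).lTensor P y) = 0 := by
    rwa [rTensor_lTensor_comm]
  obtain ⟨z, hz⟩ := (rTensor_exact (F (k + 1)) hfg hg _).mp hgy
  have hz_cycle : (d k).lTensor C' z = 0 := by
    refine Module.Flat.rTensor_preserves_injective_linearMap f hf ?_
    rw [map_zero, rTensor_lTensor_comm, hz, ← lTensor_comp_apply,
      (hd k).linearMap_comp_eq_zero, lTensor_zero, LinearMap.zero_apply]
  obtain ⟨w, hw⟩ := (h z).mp hz_cycle
  have hy_cycle : (d (k + 1)).lTensor P (y - f.rTensor _ w) = 0 := by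
    rw [map_sub, ← rTensor_lTensor_comm, hw, hz, sub_self]
  obtain ⟨v, hv⟩ := (Module.Flat.lTensor_exact P (hd (k + 1)) _).mp hy_cycle
  refine ⟨g.rTensor _ v, ?_⟩
  rw [← rTensor_lTensor_comm, hv, map_sub, ← rTensor_comp_apply, hfg.linearMap_comp_eq_zero,
    rTensor_zero, LinearMap.zero_apply, sub_zero]

theorem HasFlatDimLE.lTensor_exact [∀ i, Module.Flat R (F i)]
    (hd : ∀ i, Exact (d (i + 1)) (d i)) :
    ∀ {n : ℕ} {C : ModuleCat.{u} R}, HasFlatDimLE C n → ∀ {k : ℕ}, n ≤ k →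
      Exact ((d (k + 1)).lTensor C) ((d k).lTensor C)
  | 0, C, hC, k, _ =>
    have := hasFlatDimLE_zero_iff.mp hC
    Module.Flat.lTensor_exact C (hd k)
  | _ + 1, _, _, 0, hk => absurd hk (Nat.not_succ_le_zero _)
  | n + 1, C, hC, k + 1, hk => by
    obtain ⟨P, ε, hP, hε, hK⟩ := hasFlatDimLE_succ_iff.mp hC
    exact lTensor_exact_succ_of_lTensor_exact hd (ker ε).injective_subtype
      (exact_subtype_ker_map ε) hε
      (HasFlatDimLE.lTensor_exact hd hK (Nat.le_of_succ_le_succ hk))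

theorem Module.Flat.of_lTensor_exact_of_finitePresentation {F₂ F₁ F₀ K : Type*}
    [AddCommGroup F₂] [Module R F₂] [AddCommGroup F₁] [Module R F₁] [AddCommGroup F₀]
    [Module R F₀] [Module.Flat R F₀] [AddCommGroup K] [Module R K]
    {d₁ : F₂ →ₗ[R] F₁} {d₀ : F₁ →ₗ[R] F₀} {ε : F₀ →ₗ[R] K}
    (hd : d₀ ∘ₗ d₁ = 0) (hε : Exact d₀ ε) (hε_surj : Surjective ε)
    (h : ∀ (C : Type u) [AddCommGroup C] [Module R C], Module.FinitePresentation R C →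
      Exact (d₁.lTensor C) (d₀.lTensor C)) :
    Module.Flat R K := by
  refine Module.Flat.iff_rTensor_injective.mpr fun I hI => (injective_iff_map_eq_zero _).mpr ?_
  intro x hx
  obtain ⟨y, rfl⟩ := ε.lTensor_surjective I hε_surj x
  obtain ⟨z, hz⟩ := (_root_.lTensor_exact R hε hε_surj (I.subtype.rTensor F₀ y)).mp
    (by rwa [← rTensor_lTensor_comm])
  have hz_cycle : d₀.lTensor (R ⧸ I) (I.mkQ.rTensor F₁ z) = 0 := by
    rw [← rTensor_lTensor_comm, hz, ← rTensor_comp_apply,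
      (exact_subtype_mkQ I).linearMap_comp_eq_zero, rTensor_zero, LinearMap.zero_apply]
  obtain ⟨v, hv⟩ := h (R ⧸ I) (Module.finitePresentation_of_free_of_surjective I.mkQ
    I.mkQ_surjective (by rwa [Submodule.ker_mkQ])) _ |>.mp hz_cycle
  obtain ⟨u, rfl⟩ := I.mkQ.rTensor_surjective F₂ I.mkQ_surjective v
  have hz' : I.mkQ.rTensor F₁ (z - d₁.lTensor R u) = 0 := by
    rw [map_sub, rTensor_lTensor_comm, hv, sub_self]
  obtain ⟨t, ht⟩ := (_root_.rTensor_exact F₁ (exact_subtype_mkQ I) I.mkQ_surjective _).mp hz'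
  have hyt : d₀.lTensor I t = y := by
    refine Module.Flat.rTensor_preserves_injective_linearMap I.subtype I.injective_subtype ?_
    rw [rTensor_lTensor_comm, ht, map_sub, hz, ← lTensor_comp_apply, hd, lTensor_zero,
      LinearMap.zero_apply, sub_zero]
  rw [← hyt, ← lTensor_comp_apply, hε.linearMap_comp_eq_zero, lTensor_zero,
    LinearMap.zero_apply]

end Tor

section Syzygy

variable {R : Type u} [CommRing R] (M : ModuleCat.{u} R)

noncomputable def syzygy : ℕ → ModuleCat.{u} R
  | 0 => M
  | i + 1 => ModuleCat.of R (ker (Finsupp.linearCombination R (id : syzygy i → syzygy i)))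

noncomputable def syzygyDiff (i : ℕ) :
    (syzygy M (i + 1) →₀ R) →ₗ[R] (syzygy M i →₀ R) :=
  (ker (Finsupp.linearCombination R (id : syzygy M i → syzygy M i))).subtype ∘ₗ
    Finsupp.linearCombination R id

theorem exact_syzygyDiff_linearCombination (i : ℕ) :
    Exact (syzygyDiff M i) (Finsupp.linearCombination R (id : syzygy M i → syzygy M i)) :=
  (Finsupp.linearCombination_id_surjective R _).comp_exact_iff_exact.mpr
    (exact_subtype_ker_map _)

theorem exact_syzygyDiff (i : ℕ) : Exact (syzygyDiff M (i + 1)) (syzygyDiff M i) :=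
  (Submodule.injective_subtype _).comp_exact_iff_exact.mpr
    (exact_syzygyDiff_linearCombination M (i + 1))

theorem hasFlatDimLE_syzygy_of_flat (m : ℕ) :
    ∀ k : ℕ, Module.Flat R (syzygy M (m + k)) → HasFlatDimLE (syzygy M m) k
  | 0, h => hasFlatDimLE_zero_iff.mpr h
  | k + 1, h => hasFlatDimLE_succ_iff.mpr ⟨ModuleCat.of R (syzygy M m →₀ R),
      Finsupp.linearCombination R id, inferInstance, Finsupp.linearCombination_id_surjective R _,
      hasFlatDimLE_syzygy_of_flat (m + 1) k (by rwa [Nat.add_right_comm])⟩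

end Syzygy

/-- If there is a uniform bound `n` on the projective dimension of all finitely
presented `R`-modules, then every `R`-module has flat dimension at most `n`. -/
theorem flatDim_le_of_uniform_projDim_bound (R : Type u) [CommRing R] (n : ℕ)
    (h : ∀ (M : Type u) [AddCommGroup M] [Module R M],
      Module.FinitePresentation R M → HasProjDimLE (ModuleCat.of R M) n) :
    ∀ (N : Type u) [AddCommGroup N] [Module R N],
      HasFlatDimLE (ModuleCat.of R N) n := by
  intro N _ _
  let M := ModuleCat.of R N
  have hflat : Module.Flat R (syzygy M n) :=
    Module.Flat.of_lTensor_exact_of_finitePresentation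
      (exact_syzygyDiff M n).linearMap_comp_eq_zero (exact_syzygyDiff_linearCombination M n)
      (Finsupp.linearCombination_id_surjective R _) fun C _ _ hC =>
        (h C hC).hasFlatDimLE.lTensor_exact (F := fun i => syzygy M i →₀ R)
          (exact_syzygyDiff M) le_rfl
  exact hasFlatDimLE_syzygy_of_flat M 0 n (by rwa [zero_add])
end

section
/- For a right coherent ring R, the weak global dimension of R is finite if and only if there is a uniform finite bound on the projective dimensions of all finitely presented right R-modules. -/
universe u

open CategoryTheory

/-!
The argument never forms `Tor`: for an injection `f : S → P` into a flat module, injectivity of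
`f.rTensor K` stands for `Tor₁(P ⧸ S, K) = 0`, and dimension shifting is a diagram chase on such
maps. Cutting resolutions of `A` and `B` by flat modules into short exact sequences, the condition
for the `j`-th syzygy of `A` against the `t`-th syzygy of `B` depends only on `j + t`: it says
`Tor_{j+t+1}(A, B) = 0`.

If finitely presented modules have projective dimension `≤ n`, this gives `Tor₁(R ⧸ I, Y) = 0`
for every finitely generated ideal `I` and the `n`-th syzygy `Y` of any module, so `Y` is flat.
If all flat dimensions are `≤ n`, the same comparison makes the `n`-th syzygy of a finitely
presented module in a resolution by finite free modules flat; coherence keeps it finitely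
presented, so it is projective.
-/

open Function LinearMap
open scoped TensorProduct

section TensorChase

variable {R S' P' S K F L M P : Type*} [CommRing R]
  [AddCommGroup S'] [Module R S'] [AddCommGroup P'] [Module R P'] [AddCommGroup S] [Module R S]
  [AddCommGroup K] [Module R K] [AddCommGroup F] [Module R F] [AddCommGroup L] [Module R L]
  [AddCommGroup M] [Module R M] [AddCommGroup P] [Module R P]

theorem LinearMap.lTensor_rTensor_comm_apply (f : S →ₗ[R] P) (g : K →ₗ[R] F) (x : S ⊗[R] K) :
    g.lTensor P (f.rTensor K x) = f.rTensor F (g.lTensor S x) := by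
  rw [← comp_apply, lTensor_comp_rTensor, ← rTensor_comp_lTensor, comp_apply]

-- Both sides say `Tor₂(P ⧸ S, F ⧸ K) = 0`.
theorem rTensor_injective_iff_lTensor_injective [Module.Flat R P] [Module.Flat R F]
    {f : S →ₗ[R] P} {g : K →ₗ[R] F} (hf : Injective f) (hg : Injective g) :
    Injective (f.rTensor K) ↔ Injective (g.lTensor S) := by
  have hgP := Module.Flat.lTensor_preserves_injective_linearMap (M := P) g hg
  have hfF := Module.Flat.rTensor_preserves_injective_linearMap (M := F) f hf
  rw [← hgP.of_comp_iff, ← hfF.of_comp_iff]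
  simp only [← coe_comp, lTensor_comp_rTensor, rTensor_comp_lTensor]

theorem lTensor_injective_of_rTensor_injective [Module.Flat R P']
    {f : S' →ₗ[R] P'} {p : P' →ₗ[R] S} {g : K →ₗ[R] F} {q : F →ₗ[R] L}
    (hfp : Exact f p) (hp : Surjective p) (hg : Injective g) (hgq : Exact g q)
    (hq : Surjective q) (h : Injective (f.rTensor L)) : Injective (g.lTensor S) := by
  rw [injective_iff_map_eq_zero]
  intro x hx
  obtain ⟨y, rfl⟩ := p.rTensor_surjective K hp x
  have hy : p.rTensor F (g.lTensor P' y) = 0 := by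
    rwa [← lTensor_rTensor_comm_apply]
  obtain ⟨w, hw⟩ := (rTensor_exact F hfp hp _).mp hy
  have hw0 : q.lTensor S' w = 0 := by
    apply h
    rw [map_zero, ← lTensor_rTensor_comm_apply, hw, ← lTensor_comp_apply,
      hgq.linearMap_comp_eq_zero, lTensor_zero, LinearMap.zero_apply]
  obtain ⟨u, rfl⟩ := (lTensor_exact S' hgq hq _).mp hw0
  have hyu : f.rTensor K u = y :=
    Module.Flat.lTensor_preserves_injective_linearMap g hg
      (by rw [lTensor_rTensor_comm_apply, hw])
  rw [← hyu, ← rTensor_comp_apply, hfp.linearMap_comp_eq_zero, rTensor_zero,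
    LinearMap.zero_apply]

-- Both sides say `Tor₁(S, L) = 0`: the balance of `Tor₁`.
theorem rTensor_injective_iff_lTensor_injective_of_exact [Module.Flat R P'] [Module.Flat R F]
    {f : S' →ₗ[R] P'} {p : P' →ₗ[R] S} {g : K →ₗ[R] F} {q : F →ₗ[R] L}
    (hf : Injective f) (hfp : Exact f p) (hp : Surjective p)
    (hg : Injective g) (hgq : Exact g q) (hq : Surjective q) :
    Injective (f.rTensor L) ↔ Injective (g.lTensor S) := by
  refine ⟨lTensor_injective_of_rTensor_injective hfp hp hg hgq hq, fun h ↦ ?_⟩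
  have := lTensor_injective_of_rTensor_injective hgq hq hf hfp hp
    ((lTensor_inj_iff_rTensor_inj S g).mp h)
  exact (lTensor_inj_iff_rTensor_inj L f).mp this

theorem rTensor_injective_iff_of_exact [Module.Flat R P] [Module.Flat R P']
    {f : S →ₗ[R] P} {p : P →ₗ[R] M} {f' : S' →ₗ[R] P'} {p' : P' →ₗ[R] M}
    (hf : Injective f) (hfp : Exact f p) (hp : Surjective p)
    (hf' : Injective f') (hfp' : Exact f' p') (hp' : Surjective p') (K : Type*)
    [AddCommGroup K] [Module R K] :
    Injective (f.rTensor K) ↔ Injective (f'.rTensor K) := by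
  let q := Finsupp.linearCombination R (id : K → K)
  have hq : Surjective q := Finsupp.linearCombination_id_surjective R K
  have hex : Exact (ker q).subtype q := LinearMap.exact_subtype_ker_map q
  rw [rTensor_injective_iff_lTensor_injective_of_exact (K := ker q) hf hfp hp
      (ker q).injective_subtype hex hq,
    rTensor_injective_iff_lTensor_injective_of_exact (K := ker q) hf' hfp' hp'
      (ker q).injective_subtype hex hq]

end TensorChase

section Resolutions

variable {R : Type u} [CommRing R] (C : ModuleCat.{u} R → Prop)

-- `HasProjDimLE` and `HasFlatDimLE` are the cases `C = Module.Projective R`, `C = Module.Flat R`.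
def HasResolutionLE (M : ModuleCat.{u} R) (n : ℕ) : Prop :=
  ∃ (P : ℕ → ModuleCat.{u} R) (d : ∀ i, P (i + 1) ⟶ P i) (ε : P 0 ⟶ M),
    (∀ i, C (P i)) ∧ Surjective ε ∧ ker ε.hom = range (d 0).hom ∧
    (∀ i, ker (d i).hom = range (d (i + 1)).hom) ∧ ∀ i, n < i → Subsingleton (P i)

variable {C}

theorem HasResolutionLE.zero {M : ModuleCat.{u} R} (hM : C M)
    (hzero : C (ModuleCat.of R PUnit)) : HasResolutionLE C M 0 := by
  let P : ℕ → ModuleCat.{u} R := fun | 0 => M | _ + 1 => ModuleCat.of R PUnit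
  refine ⟨P, fun _ ↦ 0, 𝟙 M, fun | 0 => hM | _ + 1 => hzero, fun y ↦ ⟨y, rfl⟩, ?_,
    fun _ ↦ Subsingleton.elim _ _, fun | _ + 1, _ => inferInstance⟩
  rw [ModuleCat.hom_zero, range_zero]
  exact ker_eq_bot.mpr fun _ _ ↦ id

theorem HasResolutionLE.succ {K X M : ModuleCat.{u} R} {ι : K →ₗ[R] X} {π : X →ₗ[R] M}
    (hι : Injective ι) (hιπ : Exact ι π) (hπ : Surjective π) (hX : C X) {n : ℕ}
    (hK : HasResolutionLE C K n) : HasResolutionLE C M (n + 1) := by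
  obtain ⟨P, d, ε, hP, hε, hε0, hd, hn⟩ := hK
  refine ⟨fun | 0 => X | i + 1 => P i, fun | 0 => ModuleCat.ofHom (ι ∘ₗ ε.hom) | i + 1 => d i,
    ModuleCat.ofHom π, fun | 0 => hX | i + 1 => hP i, hπ, ?_, fun | 0 => ?_ | i + 1 => hd i,
    fun | i + 1, hi => hn i (by omega)⟩
  · change ker π = range (ι ∘ₗ ε.hom)
    rw [range_comp, range_eq_top.mpr hε, Submodule.map_top, exact_iff.mp hιπ]
  · change ker (ι ∘ₗ ε.hom) = _
    rw [ker_comp, ker_eq_bot.mpr hι, Submodule.comap_bot, hε0]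

end Resolutions

section Coherence

variable {R : Type*} [CommRing R]

theorem finitePresentation_of_fg_submodule_of_linearEquiv {M N : Type*} [AddCommGroup M]
    [Module R M] [AddCommGroup N] [Module R N] (e : M ≃ₗ[R] N)
    (h : ∀ L : Submodule R M, L.FG → Module.FinitePresentation R L)
    (L : Submodule R N) (hL : L.FG) : Module.FinitePresentation R L :=
  have := h _ (hL.map e.symm.toLinearMap)
  .of_equiv (M := L.map e.symm.toLinearMap) (N := L) (e.symm.submoduleMap L).symm

theorem finitePresentation_of_fg_submodule_prod {M N : Type*} [AddCommGroup M]
    [Module R M] [AddCommGroup N] [Module R N]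
    (hM : ∀ L : Submodule R M, L.FG → Module.FinitePresentation R L)
    (hN : ∀ L : Submodule R N, L.FG → Module.FinitePresentation R L)
    (L : Submodule R (M × N)) (hL : L.FG) : Module.FinitePresentation R L := by
  have : Module.Finite R L := Module.Finite.iff_fg.mpr hL
  let f := (snd R M N).submoduleMap L
  have hf : Surjective f := (snd R M N).submoduleMap_surjective L
  have := hN _ (hL.map (snd R M N))
  have : Module.Finite R (ker f) := .of_fg (Module.FinitePresentation.fg_ker f hf)
  let g : ker f →ₗ[R] M := fst R M N ∘ₗ L.subtype ∘ₗ (ker f).subtype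
  have hg : Injective ⇑g := fun x y hxy ↦ by
    have hx := congrArg Subtype.val (mem_ker.mp x.2)
    have hy := congrArg Subtype.val (mem_ker.mp y.2)
    exact Subtype.ext (Subtype.ext (Prod.ext hxy (hx.trans hy.symm)))
  have := hM (range g) (Module.Finite.iff_fg.mp inferInstance)
  have : Module.FinitePresentation R (ker f) :=
    .of_equiv (M := range g) (N := ker f) (LinearEquiv.ofInjective g hg).symm
  exact Module.finitePresentation_of_ker f hf

theorem finitePresentation_of_fg_submodule_pi
    (hcoh : ∀ I : Ideal R, I.FG → Module.FinitePresentation R I) (ι : Type*) [Finite ι]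
    (L : Submodule R (ι → R)) (hL : L.FG) : Module.FinitePresentation R L := by
  revert L
  refine Module.pi_induction' R
    (fun N _ _ ↦ ∀ L : Submodule R N, L.FG → Module.FinitePresentation R L)
    (fun N _ _ ↦ ∀ L : Submodule R N, L.FG → Module.FinitePresentation R L)
    (fun e h ↦ finitePresentation_of_fg_submodule_of_linearEquiv e h)
    (fun e h ↦ finitePresentation_of_fg_submodule_of_linearEquiv e h)
    (fun L _ ↦ .of_subsingleton L) (fun h h' ↦ finitePresentation_of_fg_submodule_prod h h')
    (fun _ : ι ↦ R) fun _ ↦ hcoh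

end Coherence

section

variable {R : Type u} [CommRing R]

theorem exists_finite_free_cover (hcoh : ∀ I : Ideal R, I.FG → Module.FinitePresentation R I)
    (N : ModuleCat.{u} R) [Module.FinitePresentation R N] :
    ∃ (X : ModuleCat.{u} R) (π : X →ₗ[R] N), Module.Projective R X ∧ Surjective π ∧
      Module.FinitePresentation R (ker π) := by
  obtain ⟨k, π, hπ⟩ := Module.Finite.exists_fin' R N
  exact ⟨.of R (Fin k → R), π, inferInstanceAs (Module.Projective R (Fin k → R)), hπ,
    finitePresentation_of_fg_submodule_pi hcoh _ _ (Module.FinitePresentation.fg_ker π hπ)⟩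

/-- A resolution `⋯ → X 1 → X 0 → Z 0 → 0` cut into the short exact sequences
`0 → Z (t + 1) → X t → Z t → 0`. -/
structure Syzygies (R : Type u) [CommRing R] where
  Z : ℕ → ModuleCat.{u} R
  X : ℕ → ModuleCat.{u} R
  ι : ∀ t, Z (t + 1) →ₗ[R] X t
  π : ∀ t, X t →ₗ[R] Z t
  injective_ι : ∀ t, Injective (ι t)
  surjective_π : ∀ t, Surjective (π t)
  exact : ∀ t, Exact (ι t) (π t)

namespace Syzygies

theorem bijective_π (S : Syzygies R) {t : ℕ} (h : Subsingleton (S.Z (t + 1))) :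
    Bijective (S.π t) := by
  refine ⟨?_, S.surjective_π t⟩
  rw [← ker_eq_bot, exact_iff.mp (S.exact t), range_eq_bot]
  exact Subsingleton.elim _ _

theorem rTensor_ι_injective_iff_succ (A B : Syzygies R) [∀ j, Module.Flat R (A.X j)]
    [∀ t, Module.Flat R (B.X t)] (j t : ℕ) :
    Injective ((A.ι (j + 1)).rTensor (B.Z t)) ↔ Injective ((A.ι j).rTensor (B.Z (t + 1))) := by
  rw [rTensor_injective_iff_lTensor_injective (A.injective_ι j) (B.injective_ι t)]
  exact rTensor_injective_iff_lTensor_injective_of_exact (A.injective_ι (j + 1)) (A.exact _)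
    (A.surjective_π _) (B.injective_ι t) (B.exact t) (B.surjective_π t)

theorem rTensor_ι_injective_iff (A B : Syzygies R) [∀ j, Module.Flat R (A.X j)]
    [∀ t, Module.Flat R (B.X t)] (j t : ℕ) :
    Injective ((A.ι j).rTensor (B.Z t)) ↔ Injective ((A.ι 0).rTensor (B.Z (j + t))) := by
  induction j generalizing t with
  | zero => rw [Nat.zero_add t]
  | succ j ih => rw [rTensor_ι_injective_iff_succ, ih, Nat.succ_add_eq_add_succ]

def shift (S : Syzygies R) : Syzygies R where
  Z t := S.Z (t + 1)
  X t := S.X (t + 1)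
  ι t := S.ι (t + 1)
  π t := S.π (t + 1)
  injective_ι t := S.injective_ι (t + 1)
  surjective_π t := S.surjective_π (t + 1)
  exact t := S.exact (t + 1)

theorem hasResolutionLE {C : ModuleCat.{u} R → Prop} (S : Syzygies R) (hX : ∀ t, C (S.X t))
    (hzero : C (ModuleCat.of R PUnit)) {n : ℕ} (hZ : C (S.Z n)) :
    HasResolutionLE C (S.Z 0) n := by
  induction n generalizing S with
  | zero => exact .zero hZ hzero
  | succ n ih =>
    exact .succ (S.injective_ι 0) (S.exact 0) (S.surjective_π 0) (hX 0)
      (ih S.shift (fun t ↦ hX (t + 1)) hZ)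

section OfComplex

variable {M : ModuleCat.{u} R} (P : ℕ → ModuleCat.{u} R) (d : ∀ i, P (i + 1) ⟶ P i)
  (ε : P 0 ⟶ M) (hε : Surjective ε) (hε0 : ker ε.hom = range (d 0).hom)
  (hd : ∀ i, ker (d i).hom = range (d (i + 1)).hom)

def ofComplex : Syzygies R where
  Z | 0 => M | t + 1 => .of R (range (d t).hom)
  X := P
  ι t := (range (d t).hom).subtype
  π | 0 => ε.hom | t + 1 => (d t).hom.rangeRestrict
  injective_ι _ := Submodule.injective_subtype _
  surjective_π | 0 => hε | _ + 1 => surjective_rangeRestrict _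
  exact
    | 0 => by rw [exact_iff, Submodule.range_subtype]; exact hε0
    | t + 1 => by rw [exact_iff, Submodule.range_subtype, ker_rangeRestrict]; exact hd t

theorem subsingleton_ofComplex_Z {t : ℕ} (h : Subsingleton (P (t + 1))) :
    Subsingleton ((ofComplex P d ε hε hε0 hd).Z (t + 1)) := by
  constructor
  rintro ⟨_, x, rfl⟩ ⟨_, y, rfl⟩
  rw [Subsingleton.elim x y]

end OfComplex

section OfCovers

variable {C P : ModuleCat.{u} R → Prop}
  (cover : ∀ N, C N → ∃ (X : ModuleCat.{u} R) (π : X →ₗ[R] N),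
    P X ∧ Surjective π ∧ C (.of R (ker π)))

noncomputable def coverTower (M : ModuleCat.{u} R) (hM : C M) : ℕ → {N : ModuleCat.{u} R // C N}
  | 0 => ⟨M, hM⟩
  | t + 1 =>
    have h := cover _ (coverTower M hM t).2
    ⟨.of R (ker h.choose_spec.choose), h.choose_spec.choose_spec.2.2⟩

noncomputable def ofCovers (M : ModuleCat.{u} R) (hM : C M) : Syzygies R where
  Z t := (coverTower cover M hM t).1
  X t := (cover _ (coverTower cover M hM t).2).choose
  π t := (cover _ (coverTower cover M hM t).2).choose_spec.choose
  ι t := (ker (cover _ (coverTower cover M hM t).2).choose_spec.choose).subtype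
  injective_ι _ := Submodule.injective_subtype _
  surjective_π t := (cover _ (coverTower cover M hM t).2).choose_spec.choose_spec.2.1
  exact _ := exact_subtype_ker_map _

theorem ofCovers_X (M : ModuleCat.{u} R) (hM : C M) (t : ℕ) : P ((ofCovers cover M hM).X t) :=
  (cover _ (coverTower cover M hM t).2).choose_spec.choose_spec.1

theorem ofCovers_Z (M : ModuleCat.{u} R) (hM : C M) (t : ℕ) : C ((ofCovers cover M hM).Z t) :=
  (coverTower cover M hM t).2

end OfCovers

noncomputable def free (M : ModuleCat.{u} R) : Syzygies R :=
  ofCovers (C := fun _ ↦ True) (P := fun X ↦ Module.Projective R X)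
    (fun N _ ↦ ⟨.of R (N →₀ R), Finsupp.linearCombination R id,
      inferInstanceAs (Module.Projective R (N →₀ R)), Finsupp.linearCombination_id_surjective R N,
      trivial⟩) M trivial

instance (M : ModuleCat.{u} R) (t : ℕ) : Module.Projective R ((free M).X t) :=
  ofCovers_X (C := fun _ ↦ True) (P := fun X ↦ Module.Projective R X) _ M trivial t

noncomputable def finiteFree (hcoh : ∀ I : Ideal R, I.FG → Module.FinitePresentation R I)
    (M : ModuleCat.{u} R) [Module.FinitePresentation R M] : Syzygies R :=
  ofCovers (C := fun N ↦ Module.FinitePresentation R N) (P := fun X ↦ Module.Projective R X)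
    (fun N _ ↦ exists_finite_free_cover hcoh N) M inferInstance

instance (hcoh : ∀ I : Ideal R, I.FG → Module.FinitePresentation R I) (M : ModuleCat.{u} R)
    [Module.FinitePresentation R M] (t : ℕ) : Module.Projective R ((finiteFree hcoh M).X t) :=
  ofCovers_X (C := fun N ↦ Module.FinitePresentation R N) (P := fun X ↦ Module.Projective R X)
    _ M inferInstance t

instance (hcoh : ∀ I : Ideal R, I.FG → Module.FinitePresentation R I) (M : ModuleCat.{u} R)
    [Module.FinitePresentation R M] (t : ℕ) :
    Module.FinitePresentation R ((finiteFree hcoh M).Z t) :=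
  ofCovers_Z (C := fun N ↦ Module.FinitePresentation R N) (P := fun X ↦ Module.Projective R X)
    _ M inferInstance t

end Syzygies

theorem hasFlatDimLE_of_forall_hasProjDimLE {n : ℕ}
    (hP : ∀ (M : Type u) [AddCommGroup M] [Module R M],
      Module.FinitePresentation R M → HasProjDimLE (ModuleCat.of R M) n)
    (N : ModuleCat.{u} R) : HasFlatDimLE N n := by
  let Y := Syzygies.free N
  suffices Module.Flat R (Y.Z n) from
    Y.hasResolutionLE (C := fun X ↦ Module.Flat R X) (fun _ ↦ inferInstance)
      (inferInstanceAs (Module.Flat R PUnit.{u + 1})) this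
  refine Module.Flat.iff_rTensor_injective.mpr fun I hI ↦ ?_
  have : Module.FinitePresentation R (R ⧸ I) :=
    Module.finitePresentation_of_surjective I.mkQ I.mkQ_surjective (by rwa [I.ker_mkQ])
  obtain ⟨P, d, ε, hPproj, hε, hε0, hd, hn⟩ := hP (R ⧸ I) this
  let Q := Syzygies.ofComplex P d ε hε hε0 hd
  have (j : ℕ) : Module.Flat R (Q.X j) := have := hPproj j; inferInstanceAs (Module.Flat R (P j))
  have : Subsingleton (Q.Z (n + 1)) :=
    Syzygies.subsingleton_ofComplex_Z _ _ _ _ _ _ (hn (n + 1) n.lt_succ_self)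
  have htop : Injective ((Q.ι n).rTensor (Y.Z 0)) := injective_of_subsingleton _
  rw [Q.rTensor_ι_injective_iff Y] at htop
  exact (rTensor_injective_iff_of_exact (Q.injective_ι 0) (Q.exact 0) (Q.surjective_π 0)
    I.injective_subtype (LinearMap.exact_subtype_mkQ I) I.mkQ_surjective _).mp htop

theorem hasProjDimLE_of_forall_hasFlatDimLE
    (hcoh : ∀ I : Ideal R, I.FG → Module.FinitePresentation R I) {n : ℕ}
    (hF : ∀ (N : Type u) [AddCommGroup N] [Module R N], HasFlatDimLE (ModuleCat.of R N) n)
    (M : ModuleCat.{u} R) [Module.FinitePresentation R M] : HasProjDimLE M n := by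
  let Y := Syzygies.finiteFree hcoh M
  suffices Module.Flat R (Y.Z n) from
    Y.hasResolutionLE (C := fun X ↦ Module.Projective R X) (fun _ ↦ inferInstance)
      (inferInstanceAs (Module.Projective R PUnit.{u + 1}))
      Module.Flat.projective_of_finitePresentation
  refine Module.Flat.iff_rTensor_injective'.mpr fun I ↦ ?_
  obtain ⟨G, d, ε, hG, hε, hε0, hd, hn⟩ := hF M
  let W := Syzygies.ofComplex G d ε hε hε0 hd
  have : ∀ t, Module.Flat R (W.X t) := hG
  have : Subsingleton (W.Z (n + 1)) :=
    Syzygies.subsingleton_ofComplex_Z _ _ _ _ _ _ (hn (n + 1) n.lt_succ_self)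
  have : Module.Flat R (W.Z n) :=
    .of_linearEquiv (LinearEquiv.ofBijective _ (W.bijective_π this)).symm
  let U := Syzygies.free (.of R (R ⧸ I))
  have hquot := rTensor_injective_iff_of_exact I.injective_subtype
    (LinearMap.exact_subtype_mkQ I) I.mkQ_surjective
    (U.injective_ι 0) (U.exact 0) (U.surjective_π 0)
  have hW : Injective ((U.ι n).rTensor (W.Z 0)) := by
    rw [U.rTensor_ι_injective_iff W, ← hquot]
    exact Module.Flat.rTensor_preserves_injective_linearMap _ I.injective_subtype
  rw [hquot]
  exact (U.rTensor_ι_injective_iff Y n 0).mp hW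

end

/-- For a coherent ring `R`, the weak global dimension of `R` is finite if and
only if there is a uniform finite bound on the projective dimensions of all
finitely presented `R`-modules. -/
theorem coherent_weakGlobalDim_finite_iff_uniform_projDim_bound (R : Type u) [CommRing R]
    (hcoh : ∀ I : Ideal R, I.FG → Module.FinitePresentation R I) :
    (∃ n : ℕ, ∀ (N : Type u) [AddCommGroup N] [Module R N],
        HasFlatDimLE (ModuleCat.of R N) n) ↔
      (∃ n : ℕ, ∀ (M : Type u) [AddCommGroup M] [Module R M],
        Module.FinitePresentation R M → HasProjDimLE (ModuleCat.of R M) n) := by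
  constructor
  · rintro ⟨n, hF⟩
    exact ⟨n, fun M _ _ _ ↦ hasProjDimLE_of_forall_hasFlatDimLE hcoh hF (.of R M)⟩
  · rintro ⟨n, hP⟩
    exact ⟨n, fun N _ _ ↦ hasFlatDimLE_of_forall_hasProjDimLE hP (.of R N)⟩
end
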